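/- arXiv:2006.06970 — 3 statements merged into one kernel-verified Lean document; each statement's English description precedes it below -/
import Mathlib

section
/- If V(n) = p⌊nφ⌋ + qn + r is a generalized Beatty sequence with integer parameters (p,q,r) and φ the golden ratio, then V∘A is a generalized Beatty sequence with parameters (p+q, p, r−p), i.e., V(A(n)) = (p+q)⌊nφ⌋ + pn + r − p for all n ≥ 1, where A(n) = ⌊nφ⌋. -/
noncomputable def phi : ℝ := (1 + Real.sqrt 5) / 2

/-- Lower Wythoff sequence. -/
noncomputable def A (n : ℕ) : ℕ := (⌊(n : ℝ) * phi⌋).toNat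

/-- Upper Wythoff sequence. -/
noncomputable def B (n : ℕ) : ℕ := (⌊(n : ℝ) * phi ^ 2⌋).toNat

/-- `d` is the digit sequence of the Zeckendorf expansion of `N`:
digits are 0/1, no two consecutive 1's, finitely many nonzero digits,
and `N = Σ dᵢ · F_{i+2}`. -/
def IsZeck (N : ℕ) (d : ℕ → ℕ) : Prop :=
  (∀ i, d i ≤ 1) ∧ (∀ i, ¬(d i = 1 ∧ d (i + 1) = 1)) ∧
  (Function.support d).Finite ∧ N = ∑ᶠ i, d i * Nat.fib (i + 2)

open Real goldenRatio

/-! Writing `⌊nφ⌋ = nφ - θ` with `0 < θ < 1` (φ is irrational), `φ² = φ + 1` gives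
`⌊nφ⌋ φ = ⌊nφ⌋ + n - θ(φ - 1)`, and `0 < θ(φ - 1) < 1`; hence `A (A n) = A n + n - 1`,
which turns `V (A n) = p A(A n) + q A n + r` into the claimed form. -/

theorem Int.floor_floor_mul_goldenRatio_mul_goldenRatio {n : ℤ} (hn : n ≠ 0) :
    ⌊(⌊n * φ⌋ : ℝ) * φ⌋ = ⌊n * φ⌋ + n - 1 := by
  set θ := Int.fract ((n : ℝ) * φ) with hθ
  have hθ_pos : 0 < θ :=
    Int.fract_pos.2 ((goldenRatio_irrational.intCast_mul hn).ne_int _)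
  have hθ_lt_one : θ < 1 := Int.fract_lt_one _
  have hmul : (⌊n * φ⌋ : ℝ) * φ = ⌊n * φ⌋ + n - θ * (φ - 1) := by
    rw [hθ, Int.fract]
    linear_combination (n : ℝ) * goldenRatio_sq
  have herr_pos : 0 < θ * (φ - 1) := by nlinarith [one_lt_goldenRatio]
  have herr_lt_one : θ * (φ - 1) < 1 := by nlinarith [goldenRatio_lt_two]
  rw [Int.floor_eq_iff, hmul]
  push_cast
  constructor <;> linarith

theorem phi_eq_goldenRatio : phi = φ := rfl

theorem intCast_A (n : ℕ) : (A n : ℤ) = ⌊(n : ℝ) * φ⌋ := by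
  rw [A, phi_eq_goldenRatio]
  exact Int.toNat_of_nonneg (Int.floor_nonneg.2 (mul_nonneg n.cast_nonneg goldenRatio_pos.le))

theorem intCast_A_A {n : ℕ} (hn : n ≠ 0) : (A (A n) : ℤ) = A n + n - 1 := by
  rw [intCast_A, intCast_A, ← Int.cast_natCast (A n), intCast_A]
  exact_mod_cast Int.floor_floor_mul_goldenRatio_mul_goldenRatio (n := n) (by exact_mod_cast hn)

/-- If V is a generalized Beatty sequence with parameters (p,q,r), then V∘A is a
generalized Beatty sequence with parameters (p+q, p, r−p). -/
theorem gbs_comp_A (p q r : ℤ) (V : ℕ → ℤ)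
    (hV : ∀ n : ℕ, V n = p * (A n : ℤ) + q * n + r) :
    ∀ n : ℕ, 1 ≤ n → V (A n) = (p + q) * (A n : ℤ) + p * n + r - p := by
  intro n hn
  rw [hV (A n), intCast_A_A (Nat.one_le_iff_ne_zero.1 hn)]
  ring
end

section
/- For all m ≥ 1 and n ≥ 1, A^{2m−1}(B(n)) − 1 = B^m(A(n)), where A(n) = ⌊nφ⌋, B(n) = ⌊nφ²⌋, and A^k, B^k denote k-fold iterates. -/
/-!
Write `f = {kφ}`, which lies in `(0, 1)` for `k ≥ 1` because `φ` is irrational. From `φ² = φ + 1`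
one gets `A(k) φ = A(k) + k - f (φ - 1)`, and this pins down the floors
`A(A k) = B k - 1`, `A(B k) = A k + B k` and `A(B k + 1) = A(B k) + 1`. With `B k = A k + k`
these give `A(B n) = B(A n) + 1` and `A(A(B k + 1)) = B(B k) + 1`, so two more applications
of `A` on the left match one more application of `B` on the right, and the theorem follows by
induction on `m`.
-/

open Real

lemma phi_sq : phi ^ 2 = phi + 1 := goldenRatio_sq

lemma one_lt_phi : 1 < phi := one_lt_goldenRatio

lemma phi_lt_two : phi < 2 := goldenRatio_lt_two

lemma A_eq_of_mul_phi_eq {x N : ℕ} {e : ℝ} (h : (x : ℝ) * phi = N + e) (he₀ : 0 ≤ e)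
    (he₁ : e < 1) : A x = N := by
  have : ⌊(x : ℝ) * phi⌋ = N := by
    rw [Int.floor_eq_iff, h]
    push_cast
    constructor <;> linarith
  simp [A, this]

lemma floor_mul_phi_nonneg (k : ℕ) : 0 ≤ ⌊(k : ℝ) * phi⌋ :=
  Int.floor_nonneg.mpr (mul_nonneg k.cast_nonneg (by linarith [one_lt_phi]))

lemma B_eq_A_add (k : ℕ) : B k = A k + k := by
  have h : (k : ℝ) * phi ^ 2 = k * phi + k := by rw [phi_sq]; ring
  have h₀ := floor_mul_phi_nonneg k
  simp only [A, B, h, Int.floor_add_natCast]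
  omega

lemma A_add_fract (k : ℕ) : (A k : ℝ) + Int.fract ((k : ℝ) * phi) = k * phi := by
  have hA : (A k : ℤ) = ⌊(k : ℝ) * phi⌋ := Int.toNat_of_nonneg (floor_mul_phi_nonneg k)
  rw [show (A k : ℝ) = ⌊(k : ℝ) * phi⌋ by exact_mod_cast hA]
  exact Int.floor_add_fract _

lemma le_A (k : ℕ) : k ≤ A k := by
  have h : (k : ℝ) < A k + 1 := by
    nlinarith [A_add_fract k, Int.fract_lt_one ((k : ℝ) * phi), one_lt_phi, k.cast_nonneg (α := ℝ)]
  exact Nat.lt_add_one_iff.mp (by exact_mod_cast h)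

lemma fract_mul_phi_pos {k : ℕ} (hk : k ≠ 0) : 0 < Int.fract ((k : ℝ) * phi) :=
  Int.fract_pos.mpr ((goldenRatio_irrational.natCast_mul hk).ne_int _)

lemma A_mul_phi (k : ℕ) :
    (A k : ℝ) * phi = A k + k - Int.fract ((k : ℝ) * phi) * (phi - 1) := by
  linear_combination (phi - 1) * A_add_fract k + k * phi_sq

lemma A_A_add_one {k : ℕ} (hk : k ≠ 0) : A (A k) + 1 = B k := by
  have hf₀ := fract_mul_phi_pos hk
  have hf₁ := Int.fract_lt_one ((k : ℝ) * phi)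
  have hA : A (A k) = A k + k - 1 := by
    refine A_eq_of_mul_phi_eq (e := 1 - Int.fract ((k : ℝ) * phi) * (phi - 1)) ?_ ?_ ?_
    · rw [A_mul_phi, Nat.cast_sub (by omega)]
      push_cast
      ring
    · nlinarith [phi_lt_two]
    · nlinarith [one_lt_phi]
  rw [hA, B_eq_A_add]
  omega

lemma A_B {k : ℕ} (hk : k ≠ 0) : A (B k) = A k + B k := by
  have hf₀ := fract_mul_phi_pos hk
  have hf₁ := Int.fract_lt_one ((k : ℝ) * phi)
  refine A_eq_of_mul_phi_eq (e := Int.fract ((k : ℝ) * phi) * (2 - phi)) ?_ ?_ ?_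
  · rw [B_eq_A_add]
    push_cast
    linear_combination A_mul_phi k - A_add_fract k
  · nlinarith [phi_lt_two]
  · nlinarith [one_lt_phi]

lemma A_B_add_one {k : ℕ} (hk : k ≠ 0) : A (B k + 1) = A (B k) + 1 := by
  have hf₀ := fract_mul_phi_pos hk
  have hf₁ := Int.fract_lt_one ((k : ℝ) * phi)
  rw [A_B hk]
  refine A_eq_of_mul_phi_eq (e := Int.fract ((k : ℝ) * phi) * (2 - phi) + (phi - 1)) ?_ ?_ ?_
  · rw [B_eq_A_add]
    push_cast
    linear_combination A_mul_phi k - A_add_fract k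
  · nlinarith [phi_lt_two, one_lt_phi]
  · nlinarith [phi_lt_two]

lemma A_B_eq_B_A_add_one {k : ℕ} (hk : k ≠ 0) : A (B k) = B (A k) + 1 := by
  have := A_A_add_one hk
  rw [A_B hk, B_eq_A_add (A k)]
  omega

lemma A_A_B_add_one {k : ℕ} (hk : k ≠ 0) : A (A (B k + 1)) = B (B k) + 1 := by
  have h₁ := A_A_add_one (B k).add_one_ne_zero
  have h₂ := B_eq_A_add (B k + 1)
  have h₃ := B_eq_A_add (B k)
  have h₄ := A_B_add_one hk
  omega

lemma iterate_B_ne_zero {k : ℕ} (hk : k ≠ 0) (s : ℕ) : B^[s] k ≠ 0 := by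
  induction s with
  | zero => exact hk
  | succ s ih =>
    rw [Function.iterate_succ_apply', B_eq_A_add]
    omega

lemma iterate_A_B {n : ℕ} (hn : n ≠ 0) (s : ℕ) :
    A^[2 * s + 1] (B n) = B^[s + 1] (A n) + 1 := by
  induction s with
  | zero => exact A_B_eq_B_A_add_one hn
  | succ s ih =>
    have hA : A n ≠ 0 := by have := le_A n; omega
    rw [show 2 * (s + 1) + 1 = 2 * s + 1 + 1 + 1 by ring, Function.iterate_succ_apply',
      Function.iterate_succ_apply', ih, Function.iterate_succ_apply' B (s + 1),
      Function.iterate_succ_apply' B s]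
    exact A_A_B_add_one (iterate_B_ne_zero hA s)

/-- A^{2m−1}(B(n)) − 1 = B^m(A(n)) for m, n ≥ 1. -/
theorem iterate_A_B_sub_one (m n : ℕ) (hm : 1 ≤ m) (hn : 1 ≤ n) :
    A^[2 * m - 1] (B n) - 1 = B^[m] (A n) := by
  obtain ⟨s, rfl⟩ : ∃ s, m = s + 1 := ⟨m - 1, by omega⟩
  rw [show 2 * (s + 1) - 1 = 2 * s + 1 by omega, iterate_A_B (by omega) s, Nat.add_sub_cancel]
end

section
/- Let w = w_{m−1}...w_0 be a binary word of length m with no factor 11, and k ≥ 0 an integer. The natural density of the set of N whose Zeckendorf expansion satisfies d_{k+m−1}...d_k = w equals F_{k+2−w_0}·φ^{−k−m−w_{m−1}}, where φ = (1+√5)/2. -/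
/-!
Let `c(M)` count the `N < M` whose Zeckendorf digits `k, …, k+m-1` spell `w`. Below
`F_{k+m+2}` these are exactly the numbers `V + ℓ`, where `V` is the value of the window and `ℓ`
ranges over `[0, F_{k+2-w₀})`: the lower `k` digits form an arbitrary Zeckendorf expansion,
which must end in `0` when `w₀ = 1`. For `n ≥ k+m` and `N < F_{n+1}`, the expansion of
`F_{n+2} + N` is that of `N` with digit `n` switched on, so `c(F_{n+2} + N) = c(F_{n+2}) + c(N)`.
Hence `c` obeys the Fibonacci recursion along Fibonacci numbers, and Binet's formula shows that
`E(M) = c(M) - ρ M`, with `ρ = F_{k+2-w₀} φ^{-(k+m+w_{m-1})}`, is bounded at Fibonacci numbers.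
Splitting off the leading Fibonacci number repeatedly, `|E(M)|` is at most linear in the number
of Zeckendorf digits of `M`, i.e. `O(log M)`, so `c(M)/M → ρ`.
-/

open scoped Classical
open Finset Filter Topology Real
open Nat (fib fib_add_two)
open scoped goldenRatio

def IsZeckWord (d : ℕ → ℕ) : Prop := (∀ i, d i ≤ 1) ∧ ∀ i, ¬(d i = 1 ∧ d (i + 1) = 1)

def fibVal (d : ℕ → ℕ) (n : ℕ) : ℕ := ∑ i ∈ range n, d i * fib (i + 2)

section Digits

variable {d e : ℕ → ℕ} {n N : ℕ}

lemma fibVal_succ (d : ℕ → ℕ) (n : ℕ) : fibVal d (n + 1) = fibVal d n + d n * fib (n + 2) :=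
  sum_range_succ _ _

lemma fibVal_add (d e : ℕ → ℕ) (n : ℕ) : fibVal (d + e) n = fibVal d n + fibVal e n := by
  simp only [fibVal, Pi.add_apply, add_mul, sum_add_distrib]

lemma fibVal_add_range (d : ℕ → ℕ) (k m : ℕ) :
    fibVal d (k + m) = fibVal d k + ∑ i ∈ range m, d (k + i) * fib (k + i + 2) :=
  sum_range_add _ k m

lemma mul_fib_le_fibVal (d : ℕ → ℕ) {i n : ℕ} (hi : i < n) : d i * fib (i + 2) ≤ fibVal d n :=
  single_le_sum (f := fun i => d i * fib (i + 2)) (fun _ _ => Nat.zero_le _) (mem_range.2 hi)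

lemma fibVal_eq_finsum (hd : ∀ i, n ≤ i → d i = 0) :
    fibVal d n = ∑ᶠ i, d i * fib (i + 2) := by
  refine (finsum_eq_sum_of_support_subset _ fun i hi => ?_).symm
  by_contra h
  simp_all

lemma isZeckWord_single (n : ℕ) : IsZeckWord (Pi.single n 1) := by
  refine ⟨fun i => ?_, fun i ⟨h₁, h₂⟩ => ?_⟩
  · rw [Pi.single_apply]; split_ifs <;> omega
  · simp only [Pi.single_apply, ite_eq_left_iff] at h₁ h₂
    omega

namespace IsZeckWord

lemma eq_zero_or_one (hd : IsZeckWord d) (i : ℕ) : d i = 0 ∨ d i = 1 := by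
  have := hd.1 i; omega

lemma eq_zero_of_succ (hd : IsZeckWord d) {i : ℕ} (h : d (i + 1) = 1) : d i = 0 := by
  rcases hd.eq_zero_or_one i with h0 | h1
  · exact h0
  · exact absurd ⟨h1, h⟩ (hd.2 i)

lemma fibVal_lt (hd : IsZeckWord d) : ∀ n, fibVal d n < fib (n + 2)
  | 0 => by simp [fibVal]
  | 1 => by rcases hd.eq_zero_or_one 0 with h | h <;> simp [fibVal, h, fib_add_two]
  | n + 2 => by
    have ih₀ := hd.fibVal_lt n
    have ih₁ := hd.fibVal_lt (n + 1)
    have hfib : fib (n + 2 + 2) = fib (n + 2) + fib (n + 1 + 2) := fib_add_two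
    have hmono : fib (n + 1 + 2) ≤ fib (n + 2 + 2) := Nat.fib_mono (by omega)
    rcases hd.eq_zero_or_one (n + 1) with h | h
    · rw [fibVal_succ, h]; omega
    · rw [fibVal_succ, fibVal_succ, h, hd.eq_zero_of_succ h]; omega

lemma fibVal_lt_fib_sub (hd : IsZeckWord d) (n : ℕ) :
    fibVal d n < fib (n + 2 - d n) := by
  rcases hd.eq_zero_or_one n with h | h
  · simpa [h] using hd.fibVal_lt n
  · cases n with
    | zero => simp [fibVal, h]
    | succ n => simpa [fibVal_succ, hd.eq_zero_of_succ h, h] using hd.fibVal_lt n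

lemma eq_of_fibVal_eq (hd : IsZeckWord d) (he : IsZeckWord e) :
    ∀ {n}, fibVal d n = fibVal e n → ∀ i < n, d i = e i
  | 0, _, _, hi => absurd hi (Nat.not_lt_zero _)
  | n + 1, h, i, hi => by
    have := hd.fibVal_lt n
    have := he.fibVal_lt n
    rw [fibVal_succ, fibVal_succ] at h
    have htop : d n = e n := by
      rcases hd.eq_zero_or_one n with h1 | h1 <;> rcases he.eq_zero_or_one n with h2 | h2 <;>
        simp only [h1, h2, zero_mul, one_mul, add_zero] at h ⊢ <;> omega
    rcases Nat.lt_succ_iff_lt_or_eq.1 hi with hi | rfl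
    · exact hd.eq_of_fibVal_eq he (by rw [htop] at h; omega) i hi
    · exact htop

lemma add (hd : IsZeckWord d) (he : IsZeckWord e) {k : ℕ} (hd0 : ∀ i, k ≤ i → d i = 0)
    (he0 : ∀ i < k, e i = 0) (hcross : ∀ i, ¬(d i = 1 ∧ e (i + 1) = 1)) :
    IsZeckWord (d + e) := by
  refine ⟨fun i => ?_, fun i => ?_⟩ <;> simp only [Pi.add_apply]
  · rcases lt_or_ge i k with h | h
    · rw [he0 i h, add_zero]; exact hd.1 i
    · rw [hd0 i h, zero_add]; exact he.1 i
  · rcases lt_or_ge (i + 1) k with h | h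
    · rw [he0 i (by omega), he0 (i + 1) h]; exact hd.2 i
    · rw [hd0 (i + 1) h, zero_add]
      rcases lt_or_ge i k with h' | h'
      · rw [he0 i h', add_zero]; exact hcross i
      · rw [hd0 i h', zero_add]; exact he.2 i

lemma add_single (hd : IsZeckWord d) (hd0 : ∀ i, n ≤ i + 1 → d i = 0) :
    IsZeckWord (d + Pi.single n 1) := by
  refine hd.add (isZeckWord_single n) (k := n) (fun i hi => hd0 i (by omega))
    (fun i hi => by simp [hi.ne]) fun i ⟨h₁, h₂⟩ => ?_
  have hin : i + 1 = n := by
    by_contra h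
    simp [h] at h₂
  rw [hd0 i hin.ge] at h₁
  exact zero_ne_one h₁

end IsZeckWord

lemma fibVal_add_single (hd0 : ∀ i, n ≤ i → d i = 0) :
    fibVal (d + Pi.single n 1) (n + 1) = fibVal d n + fib (n + 2) := by
  rw [fibVal_add, fibVal_succ, fibVal_succ, hd0 n le_rfl]
  simp [fibVal, Pi.single_apply]

lemma add_single_eq_zero (hd0 : ∀ i, n ≤ i → d i = 0) :
    ∀ i, n + 1 ≤ i → (d + Pi.single n 1 : ℕ → ℕ) i = 0 := fun i hi => by
  simp [hd0 i (by omega), show i ≠ n by omega]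

lemma exists_isZeckWord_fibVal_eq :
    ∀ n, ∀ N < fib (n + 2), ∃ d, IsZeckWord d ∧ (∀ i, n ≤ i → d i = 0) ∧ fibVal d n = N
  | 0, N, hN => ⟨0, ⟨fun _ => Nat.zero_le _, by simp⟩, fun _ _ => rfl, by simp_all [fibVal]⟩
  | n + 1, N, hN => by
    have hfib : fib (n + 1 + 2) = fib (n + 1) + fib (n + 2) := fib_add_two
    rcases lt_or_ge N (fib (n + 2)) with h | h
    · obtain ⟨d, hd, hd0, rfl⟩ := exists_isZeckWord_fibVal_eq n N h
      exact ⟨d, hd, fun i hi => hd0 i (by omega), by simp [fibVal_succ, hd0 n le_rfl]⟩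
    have hN' : N - fib (n + 2) < fib (n + 1) := by omega
    obtain ⟨d, hd, hd0, hdN⟩ := exists_isZeckWord_fibVal_eq n (N - fib (n + 2))
      (hN'.trans_le Nat.fib_le_fib_succ)
    have hd0' : ∀ i, n ≤ i + 1 → d i = 0 := fun i hi => by
      rcases eq_or_lt_of_le hi with hi | hi
      · have := mul_fib_le_fibVal d (show i < n by omega)
        rw [show i + 2 = n + 1 by omega] at this
        rcases hd.eq_zero_or_one i with h0 | h1
        · exact h0
        · rw [h1, one_mul] at this; omega
      · exact hd0 i (by omega)
    exact ⟨d + Pi.single n 1, hd.add_single hd0', add_single_eq_zero hd0,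
      by rw [fibVal_add_single hd0, hdN]; omega⟩

end Digits

section ZeckDigits

variable {d e : ℕ → ℕ} {n N : ℕ}

lemma isZeck_iff :
    IsZeck N d ↔ IsZeckWord d ∧ ∃ n, (∀ i, n ≤ i → d i = 0) ∧ fibVal d n = N := by
  refine ⟨fun ⟨h01, h11, hfin, hN⟩ => ⟨⟨h01, h11⟩, ?_⟩,
    fun ⟨hd, n, hd0, hN⟩ => ⟨hd.1, hd.2, ?_, by rw [← hN, fibVal_eq_finsum hd0]⟩⟩
  · obtain ⟨b, hb⟩ := hfin.bddAbove
    have hd0 : ∀ i, b + 1 ≤ i → d i = 0 := fun i hi => by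
      by_contra h
      exact absurd (hb (Function.mem_support.2 h)) (by omega)
    exact ⟨b + 1, hd0, by rw [hN, fibVal_eq_finsum hd0]⟩
  · refine (Set.finite_Iio n).subset fun i hi => ?_
    by_contra h
    exact hi (hd0 i (not_lt.1 h))

lemma IsZeck.fibVal_eq (h : IsZeck N d) (hd0 : ∀ i, n ≤ i → d i = 0) : fibVal d n = N := by
  rw [fibVal_eq_finsum hd0, h.2.2.2]

lemma exists_isZeck (N : ℕ) : ∃ d, IsZeck N d := by
  obtain ⟨d, hd, hd0, hN⟩ := exists_isZeckWord_fibVal_eq _ N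
    ((Nat.lt_fib_greatestFib_add_one N).trans_le Nat.fib_le_fib_succ)
  exact ⟨d, isZeck_iff.2 ⟨hd, _, hd0, hN⟩⟩

lemma IsZeck.unique (hd : IsZeck N d) (he : IsZeck N e) : d = e := by
  obtain ⟨hd', n₁, hd0, -⟩ := isZeck_iff.1 hd
  obtain ⟨he', n₂, he0, -⟩ := isZeck_iff.1 he
  have hd0' : ∀ i, max n₁ n₂ ≤ i → d i = 0 := fun i hi => hd0 i (le_of_max_le_left hi)
  have he0' : ∀ i, max n₁ n₂ ≤ i → e i = 0 := fun i hi => he0 i (le_of_max_le_right hi)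
  funext i
  rcases lt_or_ge i (max n₁ n₂) with h | h
  · exact hd'.eq_of_fibVal_eq he' (by rw [hd.fibVal_eq hd0', he.fibVal_eq he0']) i h
  · rw [hd0' i h, he0' i h]

noncomputable def zeckDigits (N : ℕ) : ℕ → ℕ := (exists_isZeck N).choose

lemma isZeck_zeckDigits (N : ℕ) : IsZeck N (zeckDigits N) := (exists_isZeck N).choose_spec

lemma isZeck_iff_eq_zeckDigits : IsZeck N d ↔ d = zeckDigits N :=
  ⟨fun h => h.unique (isZeck_zeckDigits N), fun h => h ▸ isZeck_zeckDigits N⟩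

lemma isZeckWord_zeckDigits (N : ℕ) : IsZeckWord (zeckDigits N) :=
  (isZeck_iff.1 (isZeck_zeckDigits N)).1

lemma zeckDigits_fibVal (hd : IsZeckWord d) (hd0 : ∀ i, n ≤ i → d i = 0) :
    zeckDigits (fibVal d n) = d :=
  (isZeck_iff_eq_zeckDigits.1 (isZeck_iff.2 ⟨hd, n, hd0, rfl⟩)).symm

lemma lt_fib_iff_zeckDigits_eq_zero : N < fib (n + 2) ↔ ∀ i, n ≤ i → zeckDigits N i = 0 := by
  refine ⟨fun h => ?_, fun h => ?_⟩
  · obtain ⟨d, hd, hd0, rfl⟩ := exists_isZeckWord_fibVal_eq n N h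
    rwa [zeckDigits_fibVal hd hd0]
  · rw [← (isZeck_zeckDigits N).fibVal_eq h]
    exact (isZeckWord_zeckDigits N).fibVal_lt n

lemma fibVal_zeckDigits (h : N < fib (n + 2)) : fibVal (zeckDigits N) n = N :=
  (isZeck_zeckDigits N).fibVal_eq (lt_fib_iff_zeckDigits_eq_zero.1 h)

lemma zeckDigits_fib_add (h : N < fib (n + 1)) :
    zeckDigits (fib (n + 2) + N) = zeckDigits N + Pi.single n 1 := by
  have hN : N < fib (n + 2) := h.trans_le Nat.fib_le_fib_succ
  have hd0 := lt_fib_iff_zeckDigits_eq_zero.1 hN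
  have hd0' : ∀ i, n ≤ i + 1 → zeckDigits N i = 0 := fun i hi =>
    lt_fib_iff_zeckDigits_eq_zero.1 (h.trans_le (Nat.fib_mono (by omega))) i le_rfl
  rw [← zeckDigits_fibVal ((isZeckWord_zeckDigits N).add_single hd0') (add_single_eq_zero hd0),
    fibVal_add_single hd0, fibVal_zeckDigits hN, add_comm]

end ZeckDigits

def wordAtPos (k m : ℕ) (w : ℕ → ℕ) (i : ℕ) : ℕ := if k ≤ i ∧ i < k + m then w (i - k) else 0

section WordCount

variable (k m : ℕ) (w : ℕ → ℕ)

def HasWordAt (N : ℕ) : Prop := ∀ i < m, zeckDigits N (k + i) = w i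

noncomputable def wordCount (M : ℕ) : ℕ := #{N ∈ range M | HasWordAt k m w N}

def wordValue : ℕ := ∑ i ∈ range m, w i * fib (k + i + 2)

variable {k m w} {N : ℕ}

lemma isZeckWord_wordAtPos (hw01 : ∀ i < m, w i ≤ 1)
    (hw11 : ∀ i, i + 1 < m → ¬(w i = 1 ∧ w (i + 1) = 1)) : IsZeckWord (wordAtPos k m w) := by
  refine ⟨fun i => ?_, fun i => ?_⟩ <;> simp only [wordAtPos]
  · split_ifs with h
    · exact hw01 _ (by omega)
    · exact zero_le_one
  · split_ifs with h₁ h₂ h₂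
    · rw [show i + 1 - k = i - k + 1 by omega]; exact hw11 _ (by omega)
    all_goals simp

lemma fibVal_wordAtPos : fibVal (wordAtPos k m w) (k + m) = wordValue k m w := by
  rw [fibVal_add_range, fibVal,
    sum_eq_zero fun i hi => by simp [wordAtPos, (mem_range.1 hi).not_ge], zero_add]
  exact sum_congr rfl fun i hi => by simp [wordAtPos, mem_range.1 hi]

lemma HasWordAt.eq_wordValue_add (hw : HasWordAt k m w N) (hN : N < fib (k + m + 2)) :
    N = wordValue k m w + fibVal (zeckDigits N) k := by
  conv_lhs => rw [← fibVal_zeckDigits hN, fibVal_add_range, add_comm]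
  congr 1
  exact sum_congr rfl fun i hi => by rw [hw i (mem_range.1 hi)]

lemma hasWordAt_wordValue_add (hw01 : ∀ i < m, w i ≤ 1)
    (hw11 : ∀ i, i + 1 < m → ¬(w i = 1 ∧ w (i + 1) = 1)) {low : ℕ}
    (hlow : low < fib (k + 2 - w 0)) :
    HasWordAt k m w (wordValue k m w + low) ∧ wordValue k m w + low < fib (k + m + 2) := by
  have hlow0 := lt_fib_iff_zeckDigits_eq_zero.1 (hlow.trans_le (Nat.fib_mono (Nat.sub_le _ _)))
  have he0 : ∀ i < k, wordAtPos k m w i = 0 := fun i hi => by simp [wordAtPos, hi.not_ge]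
  have hcross : ∀ i, ¬(zeckDigits low i = 1 ∧ wordAtPos k m w (i + 1) = 1) := by
    rintro i ⟨h₁, h₂⟩
    have hik : i + 1 = k := by
      by_contra h
      rcases lt_or_ge i k with h' | h'
      · exact absurd h₂ (by rw [he0 (i + 1) (by omega)]; omega)
      · exact absurd h₁ (by rw [hlow0 i h']; omega)
    have hw0 : w 0 = 1 := by
      simp only [wordAtPos, hik] at h₂
      split_ifs at h₂
      · simpa using h₂
    rw [hw0, ← hik, show i + 1 + 2 - 1 = i + 2 by omega] at hlow
    rw [lt_fib_iff_zeckDigits_eq_zero.1 hlow i le_rfl] at h₁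
    exact zero_ne_one h₁
  have hd := (isZeckWord_zeckDigits low).add (isZeckWord_wordAtPos hw01 hw11) hlow0 he0 hcross
  have hsupp : ∀ i, k + m ≤ i → (zeckDigits low + wordAtPos k m w) i = 0 := fun i hi => by
    simp [hlow0 i (by omega), wordAtPos, show ¬ i < k + m by omega]
  have hval : fibVal (zeckDigits low + wordAtPos k m w) (k + m) = wordValue k m w + low := by
    rw [fibVal_add, fibVal_wordAtPos, fibVal_zeckDigits (hlow.trans_le
      (Nat.fib_mono (by omega))), add_comm]
  refine ⟨fun i hi => ?_, hval ▸ hd.fibVal_lt _⟩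
  rw [← hval, zeckDigits_fibVal hd hsupp]
  simp [hlow0 (k + i) (by omega), wordAtPos, hi]

lemma filter_hasWordAt_range_fib_eq_image (hm : 1 ≤ m) (hw01 : ∀ i < m, w i ≤ 1)
    (hw11 : ∀ i, i + 1 < m → ¬(w i = 1 ∧ w (i + 1) = 1)) :
    {N ∈ range (fib (k + m + 2)) | HasWordAt k m w N} =
      (range (fib (k + 2 - w 0))).image (wordValue k m w + ·) := by
  ext N
  simp only [mem_filter, mem_image, mem_range]
  constructor
  · rintro ⟨hN, hw⟩
    refine ⟨fibVal (zeckDigits N) k, ?_, (hw.eq_wordValue_add hN).symm⟩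
    simpa [← hw 0 hm] using (isZeckWord_zeckDigits N).fibVal_lt_fib_sub k
  · rintro ⟨low, hlow, rfl⟩
    exact (hasWordAt_wordValue_add hw01 hw11 hlow).symm

lemma wordCount_fib_add_two (hm : 1 ≤ m) (hw01 : ∀ i < m, w i ≤ 1)
    (hw11 : ∀ i, i + 1 < m → ¬(w i = 1 ∧ w (i + 1) = 1)) :
    wordCount k m w (fib (k + m + 2)) = fib (k + 2 - w 0) := by
  rw [wordCount, filter_hasWordAt_range_fib_eq_image hm hw01 hw11,
    card_image_of_injective _ (add_right_injective _), card_range]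

lemma wordCount_fib_add_one_of_last_eq_zero (hm : 1 ≤ m) (hlast : w (m - 1) = 0) :
    wordCount k m w (fib (k + m + 1)) = wordCount k m w (fib (k + m + 2)) := by
  rw [wordCount, wordCount]
  congr 1
  ext N
  simp only [mem_filter, mem_range, and_congr_left_iff]
  refine fun hw => ⟨fun hN => hN.trans_le Nat.fib_le_fib_succ, fun hN => ?_⟩
  have hN0 := lt_fib_iff_zeckDigits_eq_zero.1 hN
  rw [show k + m + 1 = k + m - 1 + 2 by omega, lt_fib_iff_zeckDigits_eq_zero]
  intro i hi
  rcases eq_or_lt_of_le hi with rfl | hi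
  · rw [show k + m - 1 = k + (m - 1) by omega, hw _ (by omega), hlast]
  · exact hN0 i (by omega)

lemma wordCount_fib_add_one_of_last_eq_one (hm : 1 ≤ m) (hlast : w (m - 1) = 1) :
    wordCount k m w (fib (k + m + 1)) = 0 := by
  refine card_eq_zero.2 (filter_eq_empty_iff.2 fun N hN hw => ?_)
  rw [mem_range, show k + m + 1 = k + (m - 1) + 2 by omega] at hN
  have := hw (m - 1) (by omega)
  rw [lt_fib_iff_zeckDigits_eq_zero.1 hN _ le_rfl, hlast] at this
  exact zero_ne_one this

lemma hasWordAt_fib_add_iff {n : ℕ} (hn : k + m ≤ n) (hN : N < fib (n + 1)) :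
    HasWordAt k m w (fib (n + 2) + N) ↔ HasWordAt k m w N := by
  simp only [HasWordAt, zeckDigits_fib_add hN, Pi.add_apply]
  refine forall₂_congr fun i hi => ?_
  rw [Pi.single_eq_of_ne (by omega), add_zero]

lemma wordCount_fib_add {n : ℕ} (hn : k + m ≤ n) (hN : N ≤ fib (n + 1)) :
    wordCount k m w (fib (n + 2) + N) = wordCount k m w (fib (n + 2)) + wordCount k m w N := by
  simp only [wordCount, card_filter, sum_range_add]
  congr 1
  exact sum_congr rfl fun x hx => by
    rw [if_congr (hasWordAt_fib_add_iff hn ((mem_range.1 hx).trans_le hN)) rfl rfl]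

lemma wordCount_fib (hm : 1 ≤ m) (hw01 : ∀ i < m, w i ≤ 1)
    (hw11 : ∀ i, i + 1 < m → ¬(w i = 1 ∧ w (i + 1) = 1)) :
    ∀ t, wordCount k m w (fib (k + m + t + 1)) = fib (t + 1 - w (m - 1)) * fib (k + 2 - w 0)
  | 0 => by
    rcases Nat.le_one_iff_eq_zero_or_eq_one.1 (hw01 (m - 1) (by omega)) with h | h
    · simp [h, wordCount_fib_add_one_of_last_eq_zero hm h, wordCount_fib_add_two hm hw01 hw11]
    · simp [h, wordCount_fib_add_one_of_last_eq_one hm h]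
  | 1 => by
    have hfib : fib (1 + 1 - w (m - 1)) = 1 := by
      rcases Nat.le_one_iff_eq_zero_or_eq_one.1 (hw01 (m - 1) (by omega)) with h | h <;> simp [h]
    rw [hfib, one_mul, ← wordCount_fib_add_two hm hw01 hw11]
  | t + 2 => by
    have hlast := hw01 (m - 1) (by omega)
    have hfib : fib (k + m + (t + 2) + 1) = fib (k + m + t + 2) + fib (k + m + t + 1) := by
      rw [show k + m + (t + 2) + 1 = k + m + t + 1 + 2 by omega, fib_add_two, add_comm]
    have ih := wordCount_fib hm hw01 hw11 (t + 1)
    rw [show k + m + (t + 1) + 1 = k + m + t + 2 by omega] at ih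
    rw [hfib, wordCount_fib_add (by omega) le_rfl, wordCount_fib hm hw01 hw11 t, ih, ← add_mul,
      show t + 2 + 1 - w (m - 1) = t + 1 - w (m - 1) + 2 by omega, fib_add_two,
      show t + 1 + 1 - w (m - 1) = t + 1 - w (m - 1) + 1 by omega, add_comm (fib _)]

end WordCount

lemma goldenRatio_pow_le_fib_add_two (n : ℕ) : φ ^ n ≤ fib (n + 2) := by
  have hrec := goldenRatio_mul_fib_succ_add_fib (n + 1)
  have hmono : (fib (n + 1) : ℝ) ≤ fib (n + 2) := by exact_mod_cast Nat.fib_le_fib_succ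
  have hpow : φ ^ n * (φ + 1) = φ * fib (n + 2) + fib (n + 1) := by
    rw [← goldenRatio_sq, ← pow_add]; exact hrec.symm
  refine le_of_mul_le_mul_right ?_ (by positivity : 0 < φ + 1)
  rw [hpow]
  linarith

section FibAdditive

variable {E : ℕ → ℝ} {K : ℝ} {n₀ : ℕ}

lemma exists_abs_le_of_fib_add (hfib : ∀ n, n₀ ≤ n → |E (fib (n + 2))| ≤ K)
    (hadd : ∀ n, n₀ ≤ n → ∀ N ≤ fib (n + 1), E (fib (n + 2) + N) = E (fib (n + 2)) + E N) :
    ∃ C, ∀ n M, M ≤ fib (n + 2) → |E M| ≤ C + K * n := by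
  have hK : 0 ≤ K := (abs_nonneg _).trans (hfib n₀ le_rfl)
  set C := ∑ M ∈ range (fib (n₀ + 2) + 1), |E M|
  have hsmall : ∀ M ≤ fib (n₀ + 2), |E M| ≤ C := fun M hM =>
    single_le_sum (f := fun M => |E M|) (fun _ _ => abs_nonneg _) (mem_range.2 (by omega))
  refine ⟨C, fun n => ?_⟩
  induction n with
  | zero => exact fun M hM => by simpa using hsmall M (hM.trans (Nat.fib_mono (by omega)))
  | succ n ih =>
    intro M hM
    have hstep : K * (n + 1 : ℕ) = K * n + K := by push_cast; ring
    by_cases hn : n + 1 ≤ n₀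
    · have := hsmall M (hM.trans (Nat.fib_mono (by omega)))
      have : 0 ≤ K * (n + 1 : ℕ) := by positivity
      linarith
    by_cases hM' : M ≤ fib (n + 2)
    · linarith [ih M hM']
    have hfib' : fib (n + 1 + 2) = fib (n + 1) + fib (n + 2) := fib_add_two
    have hsplit := hadd n (by omega) (M - fib (n + 2)) (by omega)
    rw [Nat.add_sub_cancel' (by omega)] at hsplit
    rw [hsplit, hstep]
    have := ih (M - fib (n + 2)) (by have : fib (n + 1) ≤ fib (n + 2) := Nat.fib_le_fib_succ; omega)
    have := hfib n (by omega)
    linarith [abs_add_le (E (fib (n + 2))) (E (M - fib (n + 2)))]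

lemma tendsto_div_of_fib_add (hfib : ∀ n, n₀ ≤ n → |E (fib (n + 2))| ≤ K)
    (hadd : ∀ n, n₀ ≤ n → ∀ N ≤ fib (n + 1), E (fib (n + 2) + N) = E (fib (n + 2)) + E N) :
    Tendsto (fun M : ℕ => E M / M) atTop (𝓝 0) := by
  obtain ⟨C, hC⟩ := exists_abs_le_of_fib_add hfib hadd
  set u : ℕ → ℝ := fun n => (C + K * (n + 1 : ℕ)) * φ⁻¹ ^ n
  have hu : Tendsto u atTop (𝓝 0) := by
    have hr₀ : 0 ≤ φ⁻¹ := inv_nonneg.2 goldenRatio_pos.le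
    have hr₁ : φ⁻¹ < 1 := inv_lt_one_of_one_lt₀ one_lt_goldenRatio
    have := ((tendsto_pow_atTop_nhds_zero_of_lt_one hr₀ hr₁).const_mul (C + K)).add
      ((tendsto_self_mul_const_pow_of_lt_one hr₀ hr₁).const_mul K)
    simp only [mul_zero, add_zero] at this
    exact this.congr fun n => by simp only [u]; push_cast; ring
  have hg : Tendsto (fun M => Nat.greatestFib M - 2) atTop atTop :=
    (tendsto_sub_atTop_nat 2).comp (tendsto_atTop_atTop_of_monotone Nat.greatestFib_mono
      fun b => ⟨fib b, Nat.le_greatestFib.2 le_rfl⟩)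
  refine squeeze_zero_norm' ?_ (hu.comp hg)
  filter_upwards [eventually_ge_atTop 1] with M hM
  set n := Nat.greatestFib M - 2
  have h2 : 2 ≤ Nat.greatestFib M := Nat.le_greatestFib.2 (by simpa using hM)
  have hlo : fib (n + 2) ≤ M := by
    rw [show n + 2 = Nat.greatestFib M by omega]; exact Nat.fib_greatestFib_le M
  have hhi : M ≤ fib (n + 1 + 2) := by
    rw [show n + 1 + 2 = Nat.greatestFib M + 1 by omega]
    exact (Nat.lt_fib_greatestFib_add_one M).le
  have hE := hC (n + 1) M hhi
  have hφ : φ ^ n ≤ M := (goldenRatio_pow_le_fib_add_two n).trans (by exact_mod_cast hlo)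
  have hφ₀ : 0 < φ ^ n := pow_pos goldenRatio_pos n
  have hu₀ : 0 ≤ u n := mul_nonneg ((abs_nonneg _).trans hE) (pow_nonneg (by positivity) n)
  rw [Real.norm_eq_abs, abs_div, Nat.abs_cast, div_le_iff₀ (hφ₀.trans_le hφ)]
  calc |E M| ≤ C + K * (n + 1 : ℕ) := hE
    _ = u n * φ ^ n := by simp only [u, inv_pow]; field_simp
    _ ≤ u n * M := by gcongr

end FibAdditive

lemma abs_fib_sub_fib_add_div_pow_le (s t : ℕ) : |(fib t : ℝ) - fib (s + t) / φ ^ s| ≤ 1 := by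
  have hφ : 1 ≤ φ ^ s := one_le_pow₀ one_lt_goldenRatio.le
  have hψ : ∀ j : ℕ, |ψ ^ j| ≤ 1 := fun j => by
    rw [abs_pow]
    exact pow_le_one₀ (abs_nonneg _)
      (abs_le.2 ⟨neg_one_lt_goldenConj.le, (goldenConj_neg.trans one_pos).le⟩)
  have h5 : (2 : ℝ) ≤ √5 := Real.le_sqrt_of_sq_le (by norm_num)
  have key : (fib t : ℝ) - fib (s + t) / φ ^ s = (ψ ^ (s + t) / φ ^ s - ψ ^ t) / √5 := by
    rw [coe_fib_eq, coe_fib_eq, pow_add φ]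
    field_simp
    ring
  rw [key, abs_div, abs_of_pos (by positivity : (0 : ℝ) < √5), div_le_one (by positivity)]
  calc |ψ ^ (s + t) / φ ^ s - ψ ^ t| ≤ |ψ ^ (s + t) / φ ^ s| + |ψ ^ t| := abs_sub _ _
    _ ≤ 1 + 1 := by
      gcongr
      · rw [abs_div, abs_of_pos (pow_pos goldenRatio_pos s)]
        exact div_le_one_of_le₀ ((hψ _).trans hφ) (by positivity)
      · exact hψ t
    _ ≤ √5 := by linarith

section Density

variable {k m : ℕ} {w : ℕ → ℕ}

variable (k m w) in
noncomputable def wordDensity : ℝ := fib (k + 2 - w 0) / φ ^ (k + m + w (m - 1))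

lemma abs_wordCount_fib_sub_le (hm : 1 ≤ m) (hw01 : ∀ i < m, w i ≤ 1)
    (hw11 : ∀ i, i + 1 < m → ¬(w i = 1 ∧ w (i + 1) = 1)) {n : ℕ} (hn : k + m ≤ n) :
    |(wordCount k m w (fib (n + 2)) : ℝ) - wordDensity k m w * fib (n + 2)| ≤
      fib (k + 2 - w 0) := by
  have hlast := hw01 (m - 1) (by omega)
  set s := k + m + w (m - 1) with hs
  obtain ⟨t, ht⟩ : ∃ t, n + 2 = s + t := ⟨n + 2 - s, by omega⟩
  have hcount := wordCount_fib (k := k) hm hw01 hw11 (n + 1 - (k + m))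
  rw [show k + m + (n + 1 - (k + m)) + 1 = n + 2 by omega,
    show n + 1 - (k + m) + 1 - w (m - 1) = t by omega] at hcount
  rw [hcount, ht]
  calc _ = |(fib (k + 2 - w 0) : ℝ) * (fib t - fib (s + t) / φ ^ s)| := by
        rw [wordDensity, ← hs]; push_cast; congr 1; ring
    _ = fib (k + 2 - w 0) * |(fib t : ℝ) - fib (s + t) / φ ^ s| := by rw [abs_mul, Nat.abs_cast]
    _ ≤ fib (k + 2 - w 0) :=
        mul_le_of_le_one_right (Nat.cast_nonneg _) (abs_fib_sub_fib_add_div_pow_le s t)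

theorem tendsto_wordCount_div (hm : 1 ≤ m) (hw01 : ∀ i < m, w i ≤ 1)
    (hw11 : ∀ i, i + 1 < m → ¬(w i = 1 ∧ w (i + 1) = 1)) :
    Tendsto (fun M : ℕ => (wordCount k m w M : ℝ) / M) atTop (𝓝 (wordDensity k m w)) := by
  have herr : Tendsto (fun M : ℕ => ((wordCount k m w M : ℝ) - wordDensity k m w * M) / M)
      atTop (𝓝 0) := by
    refine tendsto_div_of_fib_add (fun n hn => abs_wordCount_fib_sub_le hm hw01 hw11 hn)
      fun n hn N hN => ?_
    rw [wordCount_fib_add hn hN]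
    push_cast
    ring
  refine (herr.add_const _).congr' ?_ |>.trans (by rw [zero_add])
  filter_upwards [eventually_ge_atTop 1] with M hM
  have : (M : ℝ) ≠ 0 := by positivity
  field_simp
  ring

end Density

/-- The natural density of the set of N whose Zeckendorf digits satisfy
d_{k+m−1}…d_k = w equals F_{k+2−w₀}·phi^{−k−m−w_{m−1}}. -/
theorem zeck_word_at_position_density (m : ℕ) (hm : 1 ≤ m) (k : ℕ) (w : ℕ → ℕ)
    (hw01 : ∀ i, i < m → w i ≤ 1)
    (hw11 : ∀ i, i + 1 < m → ¬(w i = 1 ∧ w (i + 1) = 1)) :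
    Filter.Tendsto
      (fun M : ℕ =>
        (((Finset.range M).filter
            (fun N => ∃ d : ℕ → ℕ, IsZeck N d ∧ ∀ i, i < m → d (k + i) = w i)).card : ℝ)
          / (M : ℝ))
      Filter.atTop
      (nhds ((Nat.fib (k + 2 - w 0) : ℝ) * phi ^ (-((k : ℤ) + m + w (m - 1))))) := by
  have hcount : ∀ M, ((Finset.range M).filter
      (fun N => ∃ d : ℕ → ℕ, IsZeck N d ∧ ∀ i, i < m → d (k + i) = w i)).card =
        wordCount k m w M := fun M =>
    congrArg card (filter_congr fun N _ => by simp [isZeck_iff_eq_zeckDigits, HasWordAt])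
  have hlimit : (fib (k + 2 - w 0) : ℝ) * phi ^ (-((k : ℤ) + m + w (m - 1))) =
      wordDensity k m w := by
    rw [wordDensity, div_eq_mul_inv, ← zpow_natCast, ← zpow_neg]
    push_cast
    rfl
  simpa only [hcount, hlimit] using tendsto_wordCount_div hm hw01 hw11
end
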